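/- Let f : ℝ^d → ℝ be convex, nonnegative, and l-strongly smooth (l > 0). Then for all x, y ∈ ℝ^d and every η > 0, f(y) ≤ (1 + η)·f(x) + (1 + 1/η)·(l/2)·‖x − y‖². -/

import Mathlib

/-! Nonnegativity and the quadratic upper bound at the point `x - η⁻¹ • (y - x)` give
`η⁻¹ f'(x)(y - x) ≤ f x + (l / 2) η⁻² ‖y - x‖²`, i.e. the self-bounding estimate
`f'(x)(y - x) ≤ η f x + l / (2η) ‖y - x‖²`; inserting it into the quadratic upper bound
at `y` gives the claim. -/

variable {E : Type*} [NormedAddCommGroup E] [NormedSpace ℝ E]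

theorem ContinuousLinearMap.apply_le_of_nonneg_of_quadratic_upper_bound {f : E → ℝ}
    {L : E →L[ℝ] ℝ} {x : E} {l η : ℝ} (hf : ∀ y, 0 ≤ f y)
    (hbound : ∀ y, f y ≤ f x + L (y - x) + l / 2 * ‖y - x‖ ^ 2) (hη : 0 < η) (v : E) :
    L v ≤ η * f x + l / (2 * η) * ‖v‖ ^ 2 := by
  have hstep : 0 ≤ f x - η⁻¹ * L v + l / 2 * (η⁻¹ ^ 2 * ‖v‖ ^ 2) := by
    have h := (hf _).trans (hbound (x - η⁻¹ • v))
    rwa [sub_sub_cancel_left, map_neg, map_smul, norm_neg, norm_smul, Real.norm_eq_abs,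
      abs_of_pos (inv_pos.mpr hη), mul_pow, smul_eq_mul, ← sub_eq_add_neg] at h
  have hscaled := mul_nonneg hη.le hstep
  field_simp at hscaled ⊢
  linarith

theorem stmt8 (d : ℕ) (l : ℝ)
    (f : EuclideanSpace ℝ (Fin d) → ℝ)
    (hnonneg : ∀ x, 0 ≤ f x)
    (hsmooth : ∀ x y, f y ≤ f x + fderiv ℝ f x (y - x) + l / 2 * ‖y - x‖ ^ 2) :
    ∀ x y : EuclideanSpace ℝ (Fin d), ∀ η : ℝ, 0 < η →
      f y ≤ (1 + η) * f x + (1 + 1 / η) * (l / 2) * ‖x - y‖ ^ 2 := by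
  intro x y η hη
  have hself := (fderiv ℝ f x).apply_le_of_nonneg_of_quadratic_upper_bound hnonneg
    (hsmooth x) hη (y - x)
  have hcoeff : (1 + 1 / η) * (l / 2) = l / 2 + l / (2 * η) := by field_simp
  rw [norm_sub_rev, hcoeff]
  linarith [hsmooth x y]
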